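/- arXiv:2410.16178 — 5 statements merged into one kernel-verified Lean document; each statement's English description precedes it below -/
import Mathlib

section
/- Let γ : [0,1] → ℂ \ {z₀} be a continuous closed curve, and let R_{z₀,θ} = {z₀ + r·e^{iθ} : r ≥ 0} be a ray from z₀ with angle θ. Assume γ(0) ∉ R_{z₀,θ}. Then the set A = {t ∈ [0,1] : γ(t) ∈ R_{z₀,θ}} has at least |Ind_γ(z₀)| connected components, where Ind_γ(z₀) is the winding number of γ around z₀. -/
open Complex Set

/-!
Along the polar lift, `γ t` lies on the ray exactly when `f t = (θ t - θ₀) / (2π)` is an integer,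
so `A` is the set where the continuous function `f` takes integer values. Since `f 1 = f 0 + k`,
the intermediate value theorem yields `|k|` points of `A` with pairwise distinct values of `f`,
while `f`, being continuous with values in the discrete set `ℤ` on `A`, is constant on each
connected component of `A`.
-/

theorem Complex.exists_nonneg_mul_exp_eq_iff {r : ℝ} (hr : 0 < r) (θ θ₀ : ℝ) :
    (∃ ρ : ℝ, 0 ≤ ρ ∧ (r : ℂ) * exp (θ * I) = ρ * exp (θ₀ * I)) ↔
      ∃ m : ℤ, θ = θ₀ + m * (2 * Real.pi) := by
  constructor
  · rintro ⟨ρ, hρ, h⟩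
    have hρr : ρ = r := by
      simpa [norm_exp_ofReal_mul_I, abs_of_pos hr, abs_of_nonneg hρ] using (congrArg norm h).symm
    subst hρr
    obtain ⟨m, hm⟩ := exp_eq_exp_iff_exists_int.1 (mul_left_cancel₀ (by exact_mod_cast hr.ne') h)
    refine ⟨m, ?_⟩
    have : (θ : ℂ) = θ₀ + m * (2 * Real.pi) :=
      mul_right_cancel₀ I_ne_zero (by linear_combination hm)
    exact_mod_cast this
  · rintro ⟨m, rfl⟩
    refine ⟨r, hr.le, ?_⟩
    push_cast
    rw [add_mul, exp_add, mul_assoc, exp_int_mul_two_pi_mul_I, mul_one]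

theorem ContinuousOn.eq_of_connectedComponentIn_eq {X : Type*} [TopologicalSpace X] {A : Set X}
    {f : X → ℝ} (hf : ContinuousOn f A) (hA : MapsTo f A (range ((↑) : ℤ → ℝ))) {x y : X}
    (hx : x ∈ A) (hy : y ∈ A) (h : connectedComponentIn A x = connectedComponentIn A y) :
    f x = f y :=
  isPreconnected_connectedComponentIn.constant_of_mapsTo
    Int.isClosedEmbedding_coe_real.isInducing.isDiscrete_range
    (hf.mono (connectedComponentIn_subset A x)) (hA.mono_left (connectedComponentIn_subset A x))
    (mem_connectedComponentIn hx) (h ▸ mem_connectedComponentIn hy)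

theorem Int.ceil_min_add_mem_uIcc {x y : ℝ} {k : ℤ} (hk : y = x + k) {i : ℕ}
    (hi : i < k.natAbs) : (⌈min x y⌉ + i : ℝ) ∈ uIcc x y := by
  have hmax : max x y = min x y + k.natAbs := by
    rw [Nat.cast_natAbs, Int.cast_abs, ← sub_eq_iff_eq_add', max_sub_min_eq_abs, hk,
      add_sub_cancel_left]
  have hi' : (i : ℝ) + 1 ≤ k.natAbs := by exact_mod_cast hi
  rw [uIcc, mem_Icc, hmax]
  constructor
  · linarith [Int.le_ceil (min x y), i.cast_nonneg (α := ℝ)]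
  · linarith [Int.ceil_lt_add_one (min x y)]

theorem exists_fin_natAbs_pairwise_connectedComponentIn_ne {f : ℝ → ℝ} {a b : ℝ} (hab : a ≤ b)
    (hf : ContinuousOn f (Icc a b)) {k : ℤ} (hk : f b = f a + k) :
    ∃ p : Fin k.natAbs → ℝ, (∀ i, p i ∈ {t ∈ Icc a b | f t ∈ range ((↑) : ℤ → ℝ)}) ∧
      ∀ i j, i ≠ j → connectedComponentIn {t ∈ Icc a b | f t ∈ range ((↑) : ℤ → ℝ)} (p i) ≠
        connectedComponentIn {t ∈ Icc a b | f t ∈ range ((↑) : ℤ → ℝ)} (p j) := by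
  have hlevel : ∀ i : Fin k.natAbs, ∃ t ∈ Icc a b, f t = ⌈min (f a) (f b)⌉ + i := fun i => by
    simpa [uIcc_of_le hab] using
      intermediate_value_uIcc (by rwa [uIcc_of_le hab]) (Int.ceil_min_add_mem_uIcc hk i.2)
  choose p hp hfp using hlevel
  have hpA : ∀ i, p i ∈ {t ∈ Icc a b | f t ∈ range ((↑) : ℤ → ℝ)} :=
    fun i => ⟨hp i, ⌈min (f a) (f b)⌉ + i, by push_cast; exact (hfp i).symm⟩
  refine ⟨p, hpA, fun i j hij h => hij ?_⟩
  have hfij := (hf.mono (sep_subset _ _)).eq_of_connectedComponentIn_eq (fun _ ht => ht.2)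
    (hpA i) (hpA j) h
  rw [hfp, hfp, add_right_inj, Nat.cast_inj] at hfij
  exact Fin.ext hfij

theorem stieltjes_ray_bound_general
    (z₀ : ℂ) (θ₀ : ℝ) (γ : ℝ → ℂ)
    -- continuous polar lift of γ around z₀
    (r θ : ℝ → ℝ)
    (hθ : ContinuousOn θ (Icc 0 1))
    (hrpos : ∀ t ∈ Icc (0:ℝ) 1, 0 < r t)
    (hlift : ∀ t ∈ Icc (0:ℝ) 1, γ t = z₀ + (r t : ℂ) * Complex.exp ((θ t : ℂ) * Complex.I))
    -- winding number k
    (k : ℤ) (hk : θ 1 - θ 0 = 2 * Real.pi * k)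
    -- the ray and the assumption γ(0) ∉ ray
    (R : Set ℂ) (hR : R = {z : ℂ | ∃ ρ : ℝ, 0 ≤ ρ ∧ z = z₀ + (ρ : ℂ) * Complex.exp ((θ₀ : ℂ) * Complex.I)})
    (A : Set ℝ) (hA : A = {t ∈ Icc (0:ℝ) 1 | γ t ∈ R}) :
    -- A has at least |k| connected components: there are |k| points of A
    -- lying in pairwise distinct connected components of A
    ∃ p : Fin k.natAbs → ℝ, (∀ i, p i ∈ A) ∧
      ∀ i j, i ≠ j → connectedComponentIn A (p i) ≠ connectedComponentIn A (p j) := by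
  set f : ℝ → ℝ := fun t => (θ t - θ₀) / (2 * Real.pi)
  have hπ : 2 * Real.pi ≠ 0 := by positivity
  have hAf : A = {t ∈ Icc 0 1 | f t ∈ range ((↑) : ℤ → ℝ)} := by
    ext t
    simp only [hA, hR, mem_ofPred_eq]
    refine and_congr_right fun ht => ?_
    simp only [hlift t ht, add_right_inj, exists_nonneg_mul_exp_eq_iff (hrpos t ht), mem_range,
      f, eq_div_iff hπ]
    exact exists_congr fun m => by constructor <;> intro h <;> linarith
  have hf1 : f 1 = f 0 + k := by
    simp only [f]
    field_simp
    linarith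
  rw [hAf]
  exact exists_fin_natAbs_pairwise_connectedComponentIn_ne zero_le_one
    ((hθ.sub continuousOn_const).div_const _) hf1

/-- A closed continuous curve avoiding `z₀`, with winding number `k`
(defined via a continuous polar lift), meets any ray from `z₀` not containing `γ 0`
in a set with at least `|k|` connected components. -/
theorem stieltjes_ray_bound
    (z₀ : ℂ) (θ₀ : ℝ) (γ : ℝ → ℂ)
    (hγcont : ContinuousOn γ (Icc 0 1))
    (hclosed : γ 1 = γ 0)
    (hne : ∀ t ∈ Icc (0:ℝ) 1, γ t ≠ z₀)
    -- continuous polar lift of γ around z₀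
    (r θ : ℝ → ℝ)
    (hr : ContinuousOn r (Icc 0 1)) (hθ : ContinuousOn θ (Icc 0 1))
    (hrpos : ∀ t ∈ Icc (0:ℝ) 1, 0 < r t)
    (hlift : ∀ t ∈ Icc (0:ℝ) 1, γ t = z₀ + (r t : ℂ) * Complex.exp ((θ t : ℂ) * Complex.I))
    -- winding number k
    (k : ℤ) (hk : θ 1 - θ 0 = 2 * Real.pi * k)
    -- the ray and the assumption γ(0) ∉ ray
    (R : Set ℂ) (hR : R = {z : ℂ | ∃ ρ : ℝ, 0 ≤ ρ ∧ z = z₀ + (ρ : ℂ) * Complex.exp ((θ₀ : ℂ) * Complex.I)})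
    (h0 : γ 0 ∉ R)
    (A : Set ℝ) (hA : A = {t ∈ Icc (0:ℝ) 1 | γ t ∈ R}) :
    -- A has at least |k| connected components: there are |k| points of A
    -- lying in pairwise distinct connected components of A
    ∃ p : Fin k.natAbs → ℝ, (∀ i, p i ∈ A) ∧
      ∀ i j, i ≠ j → connectedComponentIn A (p i) ≠ connectedComponentIn A (p j) :=
  stieltjes_ray_bound_general z₀ θ₀ γ r θ hθ hrpos hlift k hk R hR A hA
end

section
/- Let f : U → ℂ be a non-constant holomorphic function on an open connected set U, let D ⊆ ℂ be dense, and suppose that for every ζ ∈ D the equation f(z) = ζ has at most N solutions in U counted with multiplicity. Then for every ζ ∈ ℂ, the equation f(z) = ζ has at most N solutions in U counted with multiplicity. -/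
/-!
Near a solution `z` of `f z = ζ` of multiplicity `n`, `f - ζ = φ ^ n` with `φ` a local
biholomorphism at `z`, so every `ζ' ≠ ζ` close to `ζ` has `n` distinct preimages near `z`: the
preimages under `φ` of the `n` distinct `n`-th roots of `ζ' - ζ`. Separating finitely many
solutions by disjoint neighbourhoods, every `ζ' ≠ ζ` close to `ζ` thus has at least as many
solutions, counted with multiplicity, as `ζ`; and such `ζ'` can be taken in the dense set `D`.
Finiteness of the multiplicities is the identity theorem.
-/

open Set

open scoped Classical in
/-- The multiplicity of `z` as a solution of `f z = ζ`: the order of vanishing of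
`f - ζ` at `z` (as an extended natural number), `0` if `f - ζ` is not analytic there. -/
noncomputable def solutionMultiplicity (f : ℂ → ℂ) (ζ z : ℂ) : ℕ∞ :=
  if h : AnalyticAt ℂ (fun w => f w - ζ) z then analyticOrderAt (fun w => f w - ζ) z else 0

open Filter Topology Polynomial

lemma Complex.card_nthRootsFinset {n : ℕ} (hn : n ≠ 0) {w : ℂ} (hw : w ≠ 0) :
    (nthRootsFinset n w).card = n := by
  classical
  have hprim := Complex.isPrimitiveRoot_exp n hn
  rw [nthRootsFinset_def, Multiset.toFinset_card_of_nodup (hprim.nthRoots_nodup hw),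
    hprim.card_nthRoots, if_pos (IsAlgClosed.exists_pow_nat_eq w (Nat.pos_of_ne_zero hn))]

lemma Complex.eventually_nhdsNE_zero_nthRootsFinset (n : ℕ) {s : Set ℂ} (hs : s ∈ 𝓝 0) :
    ∀ᶠ w in 𝓝[≠] (0 : ℂ),
      (nthRootsFinset n w).card = n ∧ ↑(nthRootsFinset n w) ⊆ s := by
  rcases eq_or_ne n 0 with rfl | hn
  · simp [nthRootsFinset_zero]
  obtain ⟨ε, hε, hball⟩ := Metric.mem_nhds_iff.1 hs
  have hsmall : Metric.ball (0 : ℂ) (ε ^ n) ∈ 𝓝 0 := Metric.ball_mem_nhds 0 (pow_pos hε n)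
  filter_upwards [self_mem_nhdsWithin, nhdsWithin_le_nhds hsmall] with w (hw : w ≠ 0) hwε
  refine ⟨card_nthRootsFinset hn hw, fun u hu => hball ?_⟩
  rw [Finset.mem_coe, mem_nthRootsFinset (Nat.pos_of_ne_zero hn)] at hu
  rw [mem_ball_zero_iff] at hwε ⊢
  exact lt_of_pow_lt_pow_left₀ n hε.le (by rwa [← norm_pow, hu])

lemma AnalyticAt.exists_pow_eq_of_ne_zero {g : ℂ → ℂ} {z : ℂ} (hg : AnalyticAt ℂ g z)
    (hgz : g z ≠ 0) {n : ℕ} (hn : n ≠ 0) :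
    ∃ h : ℂ → ℂ, AnalyticAt ℂ h z ∧ h z ≠ 0 ∧ ∀ w, h w ^ n = g w := by
  obtain ⟨c, hc⟩ := IsAlgClosed.exists_pow_nat_eq (g z) (Nat.pos_of_ne_zero hn)
  have hc0 : c ≠ 0 := by
    rintro rfl
    exact hgz (by rw [← hc, zero_pow hn])
  -- `g z / g z = 1` lies in the slit plane, where the principal `n`-th root is analytic
  refine ⟨fun w => c * (g w / g z) ^ (n⁻¹ : ℂ), ?_, by simp [hgz, hc0], fun w => ?_⟩
  · exact analyticAt_const.mul
      ((hg.div analyticAt_const hgz).cpow analyticAt_const (by simp [hgz]))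
  · rw [mul_pow, Complex.cpow_nat_inv_pow _ hn, hc, mul_div_cancel₀ _ hgz]

lemma AnalyticAt.exists_map_nhds_eq_and_eventuallyEq_pow {g : ℂ → ℂ} {z : ℂ}
    (hg : AnalyticAt ℂ g z) {n : ℕ} (hn : n ≠ 0) (hord : analyticOrderAt g z = n) :
    ∃ φ : ℂ → ℂ, map φ (𝓝 z) = 𝓝 0 ∧ g =ᶠ[𝓝 z] fun w => φ w ^ n := by
  obtain ⟨k, hk, hkz, hgk⟩ := hg.analyticOrderAt_eq_natCast.1 hord
  obtain ⟨h, hh, hhz, hhk⟩ := hk.exists_pow_eq_of_ne_zero hkz hn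
  have hφa : AnalyticAt ℂ (fun w => (w - z) * h w) z :=
    (analyticAt_id.fun_sub analyticAt_const).fun_mul hh
  have hderiv : HasDerivAt (fun w => (w - z) * h w) (h z) z := by
    simpa using ((hasDerivAt_id z).sub_const z).fun_mul hh.differentiableAt.hasDerivAt
  have hφ := hφa.hasStrictDerivAt
  rw [hderiv.deriv] at hφ
  refine ⟨_, by simpa using hφ.map_nhds_eq hhz, hgk.mono fun w hw => ?_⟩
  simp [hw, mul_pow, hhk]

lemma AnalyticAt.eventually_exists_finset_of_analyticOrderAt_eq {g : ℂ → ℂ} {z : ℂ}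
    (hg : AnalyticAt ℂ g z) {n : ℕ} (hord : analyticOrderAt g z = n) {t : Set ℂ}
    (ht : t ∈ 𝓝 z) :
    ∀ᶠ w in 𝓝[≠] 0, ∃ T : Finset ℂ, n ≤ T.card ∧ ↑T ⊆ t ∩ g ⁻¹' {w} := by
  classical
  rcases eq_or_ne n 0 with rfl | hn
  · exact Eventually.of_forall fun _ => ⟨∅, by simp⟩
  obtain ⟨φ, hφ, hgφ⟩ := hg.exists_map_nhds_eq_and_eventuallyEq_pow hn hord
  have himage : φ '' (t ∩ {w | g w = φ w ^ n}) ∈ 𝓝 0 :=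
    hφ ▸ image_mem_map (inter_mem ht hgφ)
  filter_upwards [Complex.eventually_nhdsNE_zero_nthRootsFinset n himage]
    with w ⟨hcard, hroots⟩
  obtain ⟨T, hTt, hTroots⟩ := Finset.subset_set_image_iff.1 hroots
  refine ⟨T, hcard ▸ hTroots ▸ Finset.card_image_le, fun x hx => ⟨(hTt hx).1, ?_⟩⟩
  have hφx : φ x ∈ nthRootsFinset n w := hTroots ▸ Finset.mem_image_of_mem φ hx
  rw [mem_nthRootsFinset (Nat.pos_of_ne_zero hn)] at hφx
  rw [mem_preimage, mem_singleton_iff, (hTt hx).2, hφx]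

lemma solutionMultiplicity_of_analyticAt {f : ℂ → ℂ} {ζ z : ℂ} (hf : AnalyticAt ℂ f z) :
    solutionMultiplicity f ζ z = analyticOrderAt (fun w => f w - ζ) z :=
  dif_pos (hf.sub analyticAt_const)

lemma one_le_solutionMultiplicity {f : ℂ → ℂ} {ζ z : ℂ} (hf : AnalyticAt ℂ f z)
    (hz : f z = ζ) : 1 ≤ solutionMultiplicity f ζ z := by
  rw [solutionMultiplicity_of_analyticAt hf, Order.one_le_iff_ne_zero,
    (hf.fun_sub analyticAt_const).analyticOrderAt_ne_zero, hz, sub_self]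

lemma solutionMultiplicity_ne_top {U : Set ℂ} (hU : IsPreconnected U) {f : ℂ → ℂ}
    (hf : AnalyticOnNhd ℂ f U) {ζ z : ℂ} (hz : z ∈ U) (hnc : ¬ EqOn f (fun _ => ζ) U) :
    solutionMultiplicity f ζ z ≠ ⊤ := by
  obtain ⟨y, hyU, hy⟩ : ∃ y ∈ U, f y ≠ ζ := by simpa [EqOn] using hnc
  have hg : AnalyticOnNhd ℂ (fun w => f w - ζ) U := fun w hw => (hf w hw).sub analyticAt_const
  rw [solutionMultiplicity_of_analyticAt (hf z hz)]
  refine hg.analyticOrderAt_ne_top_of_isPreconnected hU hyU hz ?_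
  rw [(hg y hyU).analyticOrderAt_eq_zero.2 (sub_ne_zero.2 hy)]
  exact ENat.zero_ne_top

theorem AnalyticOnNhd.eventually_exists_finset_sum_solutionMultiplicity_le {U : Set ℂ}
    (hU : IsOpen U) {f : ℂ → ℂ} (hf : AnalyticOnNhd ℂ f U) {ζ : ℂ} {S : Finset ℂ}
    (hSU : ↑S ⊆ U) (hfin : ∀ z ∈ S, solutionMultiplicity f ζ z ≠ ⊤) :
    ∀ᶠ ζ' in 𝓝[≠] ζ, ∃ T : Finset ℂ,
      ↑T ⊆ U ∩ f ⁻¹' {ζ'} ∧ ∑ z ∈ S, solutionMultiplicity f ζ z ≤ T.card := by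
  classical
  obtain ⟨V, hV, hVdisj⟩ := S.finite_toSet.t2_separation
  have hshift : Tendsto (· - ζ) (𝓝[≠] ζ) (𝓝[≠] 0) := by
    simpa using ((hasDerivAt_id ζ).sub_const ζ).tendsto_nhdsNE one_ne_zero
  have hlocal : ∀ z ∈ S, ∀ᶠ ζ' in 𝓝[≠] ζ, ∃ T : Finset ℂ,
      (solutionMultiplicity f ζ z).toNat ≤ T.card ∧
        ↑T ⊆ V z ∩ U ∩ (fun w => f w - ζ) ⁻¹' {ζ' - ζ} := by
    intro z hz
    have hfz := hf z (hSU hz)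
    refine hshift.eventually <|
      (hfz.fun_sub analyticAt_const).eventually_exists_finset_of_analyticOrderAt_eq ?_ ?_
    · rw [← solutionMultiplicity_of_analyticAt hfz, ENat.natCast_toNat (hfin z hz)]
    · exact inter_mem ((hV z).2.mem_nhds (hV z).1) (hU.mem_nhds (hSU hz))
  filter_upwards [(eventually_all_finset S).2 hlocal] with ζ' hζ'
  choose! T hTcard hTsub using hζ'
  have hTdisj : ∀ z ∈ S, ∀ z' ∈ S, z ≠ z' → Disjoint (T z) (T z') :=
    fun z hz z' hz' hne => Finset.disjoint_coe.1 <| (hVdisj hz hz' hne).mono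
      (fun x hx => (hTsub z hz hx).1.1) (fun x hx => (hTsub z' hz' hx).1.1)
  refine ⟨S.biUnion T, fun x hx => ?_, ?_⟩
  · obtain ⟨z, hz, hxz⟩ := Finset.mem_biUnion.1 hx
    obtain ⟨⟨-, hxU⟩, hfx⟩ := hTsub z hz hxz
    exact ⟨hxU, by simpa using hfx⟩
  · calc ∑ z ∈ S, solutionMultiplicity f ζ z
        = ∑ z ∈ S, ((solutionMultiplicity f ζ z).toNat : ℕ∞) :=
          Finset.sum_congr rfl fun z hz => (ENat.natCast_toNat (hfin z hz)).symm
      _ ≤ ∑ z ∈ S, ((T z).card : ℕ∞) := by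
          gcongr with z hz
          exact_mod_cast hTcard z hz
      _ = (S.biUnion T).card := by
          rw [Finset.card_biUnion hTdisj]
          push_cast
          rfl

/-- a bound `N` on the number of solutions of `f z = ζ`, counted with
multiplicity, holding for all `ζ` in a dense set, extends to all `ζ ∈ ℂ`. -/
theorem inverse_bound_on_dense_set
    (U : Set ℂ) (hU : IsOpen U) (hUconn : IsConnected U)
    (f : ℂ → ℂ) (hf : DifferentiableOn ℂ f U)
    (hnc : ¬ ∃ c : ℂ, EqOn f (fun _ => c) U)
    (D : Set ℂ) (hD : Dense D) (N : ℕ)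
    (hbound : ∀ ζ ∈ D, ∀ S : Finset ℂ, (∀ z ∈ S, z ∈ U ∧ f z = ζ) →
      ∑ z ∈ S, solutionMultiplicity f ζ z ≤ (N : ℕ∞)) :
    ∀ ζ : ℂ, ∀ S : Finset ℂ, (∀ z ∈ S, z ∈ U ∧ f z = ζ) →
      ∑ z ∈ S, solutionMultiplicity f ζ z ≤ (N : ℕ∞) := by
  intro ζ S hS
  have hfa : AnalyticOnNhd ℂ f U := hf.analyticOnNhd hU
  have hDζ : ∃ᶠ ζ' in 𝓝[≠] ζ, ζ' ∈ D :=
    mem_closure_ne_iff_frequently_within.1 ((hD.sdiff_singleton ζ).closure_eq ▸ mem_univ ζ)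
  have hfin : ∀ z ∈ S, solutionMultiplicity f ζ z ≠ ⊤ := fun z hz =>
    solutionMultiplicity_ne_top hUconn.isPreconnected hfa (hS z hz).1 fun h => hnc ⟨ζ, h⟩
  have hmore := hfa.eventually_exists_finset_sum_solutionMultiplicity_le hU
    (fun z hz => (hS z hz).1) hfin
  obtain ⟨ζ', hζ'D, T, hTsol, hST⟩ := (hDζ.and_eventually hmore).exists
  calc ∑ z ∈ S, solutionMultiplicity f ζ z ≤ T.card := hST
    _ = ∑ _w ∈ T, 1 := by simp
    _ ≤ ∑ w ∈ T, solutionMultiplicity f ζ' w :=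
        Finset.sum_le_sum fun w hw => one_le_solutionMultiplicity (hfa w (hTsol hw).1) (hTsol hw).2
    _ ≤ N := hbound ζ' hζ'D T fun w hw => hTsol hw
end

section
/- Let μ_n, μ be Borel probability measures on ℝ with μ_n → μ weakly, all supported in a fixed compact set. Suppose there exists N ∈ ℕ such that for every n and every ζ ∈ ℂ the equation G_{μ_n}(z) = ζ has at most N solutions in ℂ \ ℝ counted with multiplicity. Then for every ζ ∈ ℂ, the equation G_μ(z) = ζ has at most N solutions in ℂ \ ℝ counted with multiplicity. -/
/-!
Weak convergence gives `G_{μ_n} → G_ν` locally uniformly off the real axis: pointwise because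
`x ↦ (z - x)⁻¹` is bounded and continuous, and uniformly on compact sets because the transforms
are uniformly Lipschitz on `{z | d ≤ |z.im|}`. If `G_ν - ζ` vanishes to order `m_z` at the points
`z` of `S`, then for generic `ζ'` close to `ζ` the equation `G_ν = ζ'` has `m_z` distinct
solutions near each `z` (locally `G_ν - ζ` is the `m_z`-th power of a chart), so `∑ m_z` in all.
By Hurwitz's theorem each of these isolated solutions persists for `G_{μ_n}`, `n` large, which
gives `∑ m_z` distinct solutions of `G_{μ_n} = ζ'`, each of multiplicity at least one. The orders
`m_z` are finite because `G_ν` is not locally constant: it tends to `0` at infinity in each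
half-plane but does not vanish there.
-/

open MeasureTheory Filter Set

open scoped Classical in
/-- The multiplicity of `z` as a solution of `G z = ζ`: the order of vanishing of
`G - ζ` at `z` (as an extended natural number), `0` if `G - ζ` is not analytic there. -/
noncomputable def stieltjesSolMult (G : ℂ → ℂ) (ζ z : ℂ) : ℕ∞ :=
  if h : AnalyticAt ℂ (fun w => G w - ζ) z then analyticOrderAt (fun w => G w - ζ) z else 0

open Metric Topology

lemma card_nthRootsFinset_of_ne_zero {m : ℕ} (hm : m ≠ 0) {a : ℂ} (ha : a ≠ 0) :
    (Polynomial.nthRootsFinset m a).card = m := by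
  classical
  have hω := Complex.isPrimitiveRoot_exp m hm
  rw [Polynomial.nthRootsFinset_def, Multiset.toFinset_card_of_nodup (hω.nthRoots_nodup ha),
    hω.card_nthRoots, if_pos (IsAlgClosed.exists_pow_nat_eq a (Nat.pos_of_ne_zero hm))]

lemma AnalyticAt.exists_analyticAt_pow_eq {h : ℂ → ℂ} {z₀ : ℂ} (hh : AnalyticAt ℂ h z₀)
    (h0 : h z₀ ≠ 0) {m : ℕ} (hm : m ≠ 0) :
    ∃ g : ℂ → ℂ, AnalyticAt ℂ g z₀ ∧ g z₀ ≠ 0 ∧ ∀ w, g w ^ m = h w := by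
  obtain ⟨c, hc⟩ := IsAlgClosed.exists_pow_nat_eq (h z₀) (Nat.pos_of_ne_zero hm)
  have hc0 : c ≠ 0 := by rintro rfl; exact h0 (by simp [← hc, hm])
  refine ⟨fun w => c * (h w / h z₀) ^ (m⁻¹ : ℂ), ?_, by simp [h0, hc0], fun w => ?_⟩
  · exact analyticAt_const.mul ((hh.div analyticAt_const h0).cpow analyticAt_const
      (by simp [h0]))
  · rw [mul_pow, Complex.cpow_nat_inv_pow _ hm, hc, mul_div_cancel₀ _ h0]

lemma AnalyticAt.exists_map_nhds_eq_and_eventually_eq_pow {f : ℂ → ℂ} {z₀ : ℂ}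
    (hf : AnalyticAt ℂ f z₀) {m : ℕ} (hm : m ≠ 0) (hord : analyticOrderAt f z₀ = m) :
    ∃ φ : ℂ → ℂ, map φ (𝓝 z₀) = 𝓝 0 ∧ ∀ᶠ w in 𝓝 z₀, f w = φ w ^ m := by
  obtain ⟨h, hh, h0, hfh⟩ := hf.analyticOrderAt_eq_natCast.1 hord
  obtain ⟨g, hg, hg0, hgh⟩ := hh.exists_analyticAt_pow_eq h0 hm
  set φ := fun w => (w - z₀) * g w
  have hφ : AnalyticAt ℂ φ z₀ := (analyticAt_id.sub analyticAt_const).mul hg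
  have hφ' : deriv φ z₀ = g z₀ := by
    have : HasDerivAt φ _ z₀ := ((hasDerivAt_id z₀).sub_const z₀).mul hg.differentiableAt.hasDerivAt
    simpa using this.deriv
  refine ⟨φ, ?_, ?_⟩
  · simpa [φ] using hφ.hasStrictDerivAt.map_nhds_eq (hφ'.trans_ne hg0)
  · filter_upwards [hfh] with w hw
    simp [hw, φ, mul_pow, hgh]

theorem AnalyticAt.eventually_exists_finset_card_eq_analyticOrderAt {f : ℂ → ℂ} {z₀ ζ : ℂ}
    (hf : AnalyticAt ℂ f z₀) (hfin : analyticOrderAt (fun w => f w - ζ) z₀ ≠ ⊤) {s : Set ℂ}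
    (hs : s ∈ 𝓝 z₀) :
    ∀ᶠ ζ' in 𝓝[≠] ζ, ∃ T : Finset ℂ, ↑T ⊆ s ∧
      (T.card : ℕ∞) = analyticOrderAt (fun w => f w - ζ) z₀ ∧ ∀ w ∈ T, f w = ζ' := by
  obtain ⟨m, hm⟩ := ENat.ne_top_iff_exists.1 hfin
  rw [← hm]
  rcases eq_or_ne m 0 with rfl | hm0
  · exact .of_forall fun _ => ⟨∅, by simp⟩
  obtain ⟨φ, hφ, hfφ⟩ :=
    (hf.sub analyticAt_const).exists_map_nhds_eq_and_eventually_eq_pow hm0 hm.symm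
  set V := {w | f w - ζ = φ w ^ m} ∩ s
  have hV : φ '' V ∈ 𝓝 0 := hφ ▸ image_mem_map (inter_mem hfφ hs)
  obtain ⟨r, hr, hrV⟩ := Metric.mem_nhds_iff.1 hV
  filter_upwards [nhdsWithin_le_nhds (ball_mem_nhds ζ (pow_pos hr m)), self_mem_nhdsWithin]
    with ζ' hζ'r hζ'ζ
  have hroot : ∀ t ∈ Polynomial.nthRootsFinset m (ζ' - ζ), t ∈ φ '' V := by
    intro t ht
    rw [Polynomial.mem_nthRootsFinset (Nat.pos_of_ne_zero hm0)] at ht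
    refine hrV (mem_ball_zero_iff.2 ((pow_lt_pow_iff_left₀ (norm_nonneg _) hr.le hm0).1 ?_))
    rwa [← norm_pow, ht, ← dist_eq_norm]
  choose! p hpV hpφ using hroot
  refine ⟨(Polynomial.nthRootsFinset m (ζ' - ζ)).image p, ?_, ?_, ?_⟩
  · rw [Finset.coe_image, Set.image_subset_iff]
    exact fun t ht => (hpV t ht).2
  · rw [Finset.card_image_of_injOn fun t ht t' ht' h => by rw [← hpφ t ht, ← hpφ t' ht', h],
      card_nthRootsFinset_of_ne_zero hm0 (sub_ne_zero.2 hζ'ζ)]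
  · simp only [Finset.mem_image]
    rintro _ ⟨t, ht, rfl⟩
    have hfp : f (p t) - ζ = φ (p t) ^ m := (hpV t ht).1
    rw [hpφ t ht] at hfp
    rw [Polynomial.mem_nthRootsFinset (Nat.pos_of_ne_zero hm0)] at ht
    linear_combination hfp + ht

lemma Finset.exists_pos_pairwiseDisjoint_closedBall_subset {X : Type*} [MetricSpace X]
    (S : Finset X) {U : X → Set X} (hU : ∀ x ∈ S, U x ∈ 𝓝 x) :
    ∃ r > 0, (S : Set X).PairwiseDisjoint (closedBall · r) ∧ ∀ x ∈ S, closedBall x r ⊆ U x := by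
  have hsep : ∀ p ∈ S ×ˢ S, ∀ᶠ r in 𝓝 (0 : ℝ), p.1 ≠ p.2 → r + r < dist p.1 p.2 := by
    rintro ⟨x, y⟩ -
    rcases eq_or_ne x y with rfl | hxy
    · simp
    · have : Tendsto (fun r : ℝ => r + r) (𝓝 0) (𝓝 0) := by
        simpa using (tendsto_id (x := 𝓝 (0 : ℝ))).add tendsto_id
      filter_upwards [this.eventually_lt_const (dist_pos.2 hxy)] with r hr using fun _ => hr
  obtain ⟨r, hr, hdisj, hsub⟩ := (eventually_mem_nhdsWithin.and (nhdsWithin_le_nhds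
    (((eventually_all_finset _).2 hsep).and ((eventually_all_finset S).2 fun x hx =>
      eventually_closedBall_subset (hU x hx)))) : ∀ᶠ r in 𝓝[>] (0 : ℝ), _).exists
  exact ⟨r, hr, fun x hx y hy hxy => closedBall_disjoint_closedBall
    (hdisj (x, y) (Finset.mem_product.2 ⟨hx, hy⟩) hxy), hsub⟩

theorem eventually_exists_finset_card_eq_sum_analyticOrderAt {f : ℂ → ℂ} {U : Set ℂ}
    (hU : IsOpen U) {S : Finset ℂ} (hSU : ↑S ⊆ U) (hf : ∀ z ∈ S, AnalyticAt ℂ f z) {ζ : ℂ}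
    (hfin : ∀ z ∈ S, analyticOrderAt (fun w => f w - ζ) z ≠ ⊤) :
    ∀ᶠ ζ' in 𝓝[≠] ζ, ∃ W : Finset ℂ, ↑W ⊆ U ∧
      (W.card : ℕ∞) = ∑ z ∈ S, analyticOrderAt (fun w => f w - ζ) z ∧ ∀ w ∈ W, f w = ζ' := by
  obtain ⟨r, hr, hdisj, hrU⟩ :=
    S.exists_pos_pairwiseDisjoint_closedBall_subset fun z hz => hU.mem_nhds (hSU hz)
  filter_upwards [(eventually_all_finset S).2 fun z hz =>
    (hf z hz).eventually_exists_finset_card_eq_analyticOrderAt (hfin z hz) (ball_mem_nhds z hr)]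
    with ζ' hζ'
  choose! T hTball hTcard hTf using hζ'
  have hTdisj : (S : Set ℂ).PairwiseDisjoint T := fun z hz z' hz' hzz' =>
    Finset.disjoint_coe.1 ((hdisj hz hz' hzz').mono
      ((hTball z hz).trans ball_subset_closedBall) ((hTball z' hz').trans ball_subset_closedBall))
  refine ⟨S.biUnion T, ?_, ?_, ?_⟩
  · simpa using fun z hz => (hTball z hz).trans (ball_subset_closedBall.trans (hrU z hz))
  · rw [Finset.card_biUnion hTdisj, Nat.cast_sum]
    exact Finset.sum_congr rfl hTcard
  · simp only [Finset.mem_biUnion]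
    rintro w ⟨z, hz, hw⟩
    exact hTf z hz w hw

theorem eventually_exists_mem_ball_eq_of_tendstoUniformlyOn {ι : Type*} {l : Filter ι}
    {F : ι → ℂ → ℂ} {f : ℂ → ℂ} {w c : ℂ} {r : ℝ} (hr : 0 < r)
    (hF : ∀ᶠ i in l, DifferentiableOn ℂ (F i) (closedBall w r))
    (hf : ContinuousOn f (sphere w r)) (hFf : TendstoUniformlyOn F f l (closedBall w r))
    (hfw : f w = c) (hfc : ∀ z ∈ sphere w r, f z ≠ c) :
    ∀ᶠ i in l, ∃ z ∈ ball w r, F i z = c := by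
  obtain ⟨δ, hδ, hδf⟩ := (isCompact_sphere w r).exists_forall_le'
    (hf.sub continuousOn_const).norm fun z hz => norm_pos_iff.2 (sub_ne_zero.2 (hfc z hz))
  filter_upwards [hF, Metric.tendstoUniformlyOn_iff.1 hFf (δ / 2) (half_pos hδ)] with i hFi hclose
  -- Otherwise `(F i - c)⁻¹` is holomorphic on the closed ball and at most `(δ / 2)⁻¹` on the
  -- sphere, but larger at the centre, against the maximum modulus principle.
  by_contra! hno
  have hsphere : ∀ z ∈ sphere w r, δ / 2 ≤ ‖F i z - c‖ := fun z hz => by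
    have h₁ : δ ≤ ‖f z - c‖ := hδf z hz
    have h₂ := hclose z (sphere_subset_closedBall hz)
    have h₃ := norm_sub_le_norm_sub_add_norm_sub (f z) (F i z) c
    rw [dist_eq_norm] at h₂
    linarith
  have hne : ∀ z ∈ closedBall w r, F i z - c ≠ 0 := fun z hz => by
    rcases (mem_closedBall.1 hz).eq_or_lt with h | h
    · exact norm_pos_iff.1 ((half_pos hδ).trans_le (hsphere z h))
    · exact sub_ne_zero.2 (hno z (mem_ball.2 h))
  have hdiff : DiffContOnCl ℂ (fun z => (F i z - c)⁻¹) (ball w r) :=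
    ⟨((hFi.mono ball_subset_closedBall).sub_const c).inv
      fun z hz => hne z (ball_subset_closedBall hz),
     by rw [closure_ball w hr.ne']; exact (hFi.continuousOn.sub continuousOn_const).inv₀ hne⟩
  have hmax : ‖(F i w - c)⁻¹‖ ≤ (δ / 2)⁻¹ :=
    Complex.norm_le_of_forall_mem_frontier_norm_le isBounded_ball hdiff
      (fun z hz => by
        rw [frontier_ball w hr.ne'] at hz
        rw [norm_inv]
        exact inv_anti₀ (half_pos hδ) (hsphere z hz))
      (subset_closure (mem_ball_self hr))
  have hcenter : ‖F i w - c‖ < δ / 2 := by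
    simpa [dist_eq_norm, hfw, norm_sub_rev] using hclose w (mem_closedBall_self hr.le)
  rw [norm_inv, inv_le_inv₀ (norm_pos_iff.2 (hne w (mem_closedBall_self hr.le))) (half_pos hδ)]
    at hmax
  linarith

theorem eventually_exists_finset_card_eq_of_tendstoLocallyUniformlyOn {ι : Type*}
    {l : Filter ι} {F : ι → ℂ → ℂ} {f : ℂ → ℂ} {U : Set ℂ} (hU : IsOpen U)
    (hF : ∀ᶠ i in l, DifferentiableOn ℂ (F i) U) (hf : AnalyticOnNhd ℂ f U)
    (hFf : TendstoLocallyUniformlyOn F f l U) (hf_nc : ∀ z ∈ U, ∀ c, ¬ ∀ᶠ w in 𝓝 z, f w = c)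
    {W : Finset ℂ} (hWU : ↑W ⊆ U) {c : ℂ} (hWc : ∀ w ∈ W, f w = c) :
    ∀ᶠ i in l, ∃ W' : Finset ℂ, ↑W' ⊆ U ∧ W'.card = W.card ∧ ∀ z ∈ W', F i z = c := by
  have hiso : ∀ w ∈ W, U ∩ {z | z ≠ w → f z ≠ c} ∈ 𝓝 w := fun w hw =>
    inter_mem (hU.mem_nhds (hWU hw)) <| eventually_nhdsWithin_iff.1 <|
      ((hf w (hWU hw)).eventually_eq_or_eventually_ne analyticAt_const).resolve_left
        (hf_nc w (hWU hw) c)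
  obtain ⟨r, hr, hdisj, hrU⟩ := W.exists_pos_pairwiseDisjoint_closedBall_subset hiso
  have hball : ∀ w ∈ W, ∀ᶠ i in l, ∃ z ∈ ball w r, F i z = c := fun w hw => by
    have hsub : closedBall w r ⊆ U := (hrU w hw).trans inter_subset_left
    exact eventually_exists_mem_ball_eq_of_tendstoUniformlyOn hr
      (hF.mono fun i hi => hi.mono hsub)
      (hf.continuousOn.mono (sphere_subset_closedBall.trans hsub))
      ((tendstoLocallyUniformlyOn_iff_forall_isCompact hU).1 hFf _ hsub (isCompact_closedBall w r))
      (hWc w hw) fun z hz => (hrU w hw (sphere_subset_closedBall hz)).2 (ne_of_mem_sphere hz hr.ne')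
  filter_upwards [(eventually_all_finset W).2 hball] with i hi
  choose! p hpball hpc using hi
  refine ⟨W.image p, ?_, Finset.card_image_of_injOn fun w hw w' hw' h => hdisj.elim_set hw hw' (p w)
    (ball_subset_closedBall (hpball w hw)) (h ▸ ball_subset_closedBall (hpball w' hw')), ?_⟩
  · rw [Finset.coe_image, Set.image_subset_iff]
    exact fun w hw => (hrU w hw).trans inter_subset_left (ball_subset_closedBall (hpball w hw))
  · simpa using hpc

noncomputable def stieltjesTransform (μ : Measure ℝ) (z : ℂ) : ℂ := ∫ x : ℝ, (z - x)⁻¹ ∂μ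

lemma abs_im_le_norm_sub_ofReal (z : ℂ) (x : ℝ) : |z.im| ≤ ‖z - x‖ := by
  simpa using Complex.abs_im_le_norm (z - x)

lemma sub_ofReal_ne_zero {z : ℂ} (hz : z.im ≠ 0) (x : ℝ) : z - x ≠ 0 := fun h =>
  hz (by simpa using congrArg Complex.im h)

lemma norm_inv_sub_ofReal_le {z : ℂ} {d : ℝ} (hd : 0 < d) (hz : d ≤ |z.im|) (x : ℝ) :
    ‖(z - x)⁻¹‖ ≤ d⁻¹ := by
  rw [norm_inv]
  exact inv_anti₀ hd (hz.trans (abs_im_le_norm_sub_ofReal z x))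

lemma continuous_inv_sub_ofReal {z : ℂ} (hz : z.im ≠ 0) : Continuous fun x : ℝ => (z - x)⁻¹ :=
  (continuous_const.sub Complex.continuous_ofReal).inv₀ (sub_ofReal_ne_zero hz)

lemma integrable_inv_sub_ofReal (μ : Measure ℝ) [IsFiniteMeasure μ] {z : ℂ} (hz : z.im ≠ 0) :
    Integrable (fun x : ℝ => (z - x)⁻¹) μ :=
  .of_bound (continuous_inv_sub_ofReal hz).aestronglyMeasurable _
    (ae_of_all _ (norm_inv_sub_ofReal_le (abs_pos.2 hz) le_rfl))

lemma norm_stieltjesTransform_le (μ : Measure ℝ) [IsProbabilityMeasure μ] {z : ℂ} {d : ℝ}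
    (hd : 0 < d) (hz : d ≤ |z.im|) : ‖stieltjesTransform μ z‖ ≤ d⁻¹ := by
  simpa [stieltjesTransform] using norm_integral_le_of_norm_le_const (μ := μ)
    (ae_of_all _ (norm_inv_sub_ofReal_le hd hz))

lemma dist_inv_sub_ofReal_le {z z' : ℂ} {d : ℝ} (hd : 0 < d) (hz : d ≤ |z.im|)
    (hz' : d ≤ |z'.im|) (x : ℝ) : dist (z - x)⁻¹ (z' - x)⁻¹ ≤ d⁻¹ * d⁻¹ * dist z z' := by
  have hne : ∀ w : ℂ, d ≤ |w.im| → w - x ≠ 0 := fun w hw =>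
    sub_ofReal_ne_zero (abs_pos.1 (hd.trans_le hw)) x
  have key : (z - x)⁻¹ - (z' - x)⁻¹ = (z - x)⁻¹ * (z' - x)⁻¹ * (z' - z) := by
    field_simp [hne z hz, hne z' hz']
    ring
  rw [dist_eq_norm, key, norm_mul, norm_mul, ← dist_eq_norm, dist_comm]
  gcongr
  · exact norm_inv_sub_ofReal_le hd hz x
  · exact norm_inv_sub_ofReal_le hd hz' x

lemma lipschitzOnWith_stieltjesTransform (μ : Measure ℝ) [IsProbabilityMeasure μ] {d : ℝ}
    (hd : 0 < d) : LipschitzOnWith (Real.toNNReal (d⁻¹ * d⁻¹)) (stieltjesTransform μ)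
      {z | d ≤ |z.im|} := by
  refine LipschitzOnWith.of_dist_le_mul fun z hz z' hz' => ?_
  have hint : ∀ w : ℂ, d ≤ |w.im| → Integrable (fun x : ℝ => (w - x)⁻¹) μ := fun w hw =>
    integrable_inv_sub_ofReal μ (abs_pos.1 (hd.trans_le hw))
  rw [Real.coe_toNNReal _ (by positivity), dist_eq_norm, stieltjesTransform, stieltjesTransform,
    ← integral_sub (hint z hz) (hint z' hz')]
  simpa using norm_integral_le_of_norm_le_const (μ := μ)
    (ae_of_all _ fun x => (dist_eq_norm _ _).symm.trans_le (dist_inv_sub_ofReal_le hd hz hz' x))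

lemma hasDerivAt_stieltjesTransform (μ : Measure ℝ) [IsFiniteMeasure μ] {z₀ : ℂ}
    (hz₀ : z₀.im ≠ 0) :
    HasDerivAt (stieltjesTransform μ) (∫ x : ℝ, -(z₀ - x)⁻¹ ^ 2 ∂μ) z₀ := by
  set d := |z₀.im| / 2 with hd_def
  have hd : 0 < d := by positivity
  have him : ∀ z ∈ ball z₀ d, d ≤ |z.im| := fun z hz => by
    have h₁ := abs_sub_abs_le_abs_sub z₀.im z.im
    have h₂ : |z₀.im - z.im| ≤ dist z₀ z := by
      simpa [dist_eq_norm] using Complex.abs_im_le_norm (z₀ - z)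
    rw [mem_ball'] at hz
    linarith
  have hne : ∀ z ∈ ball z₀ d, z.im ≠ 0 := fun z hz => abs_pos.1 (hd.trans_le (him z hz))
  refine (hasDerivAt_integral_of_dominated_loc_of_deriv_le (F := fun (z : ℂ) (x : ℝ) => (z - x)⁻¹)
    (F' := fun (z : ℂ) (x : ℝ) => -(z - x)⁻¹ ^ 2) (bound := fun _ => d⁻¹ ^ 2)
    (ball_mem_nhds z₀ hd) ?_ (integrable_inv_sub_ofReal μ hz₀) ?_ ?_ (integrable_const _) ?_).2
  · filter_upwards [ball_mem_nhds z₀ hd] with z hz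
    exact (continuous_inv_sub_ofReal (hne z hz)).aestronglyMeasurable
  · exact ((continuous_inv_sub_ofReal hz₀).pow 2).neg.aestronglyMeasurable
  · refine ae_of_all _ fun x z hz => ?_
    rw [norm_neg, norm_pow]
    gcongr
    exact norm_inv_sub_ofReal_le hd (him z hz) x
  · refine ae_of_all _ fun x z hz => ?_
    exact (((hasDerivAt_id z).sub_const (x : ℂ)).inv (sub_ofReal_ne_zero (hne z hz) x)).congr_deriv
      (by simp [neg_div, inv_pow])

lemma isOpen_setOf_im_ne_zero : IsOpen {z : ℂ | z.im ≠ 0} :=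
  isOpen_ne_fun Complex.continuous_im continuous_const

lemma analyticOnNhd_stieltjesTransform (μ : Measure ℝ) [IsFiniteMeasure μ] :
    AnalyticOnNhd ℂ (stieltjesTransform μ) {z | z.im ≠ 0} :=
  DifferentiableOn.analyticOnNhd (fun _ hz => (hasDerivAt_stieltjesTransform μ hz)
    |>.differentiableAt.differentiableWithinAt) isOpen_setOf_im_ne_zero

lemma stieltjesTransform_ne_zero (μ : Measure ℝ) [IsProbabilityMeasure μ] {z : ℂ}
    (hz : z.im ≠ 0) : stieltjesTransform μ z ≠ 0 := by
  have hint := integrable_inv_sub_ofReal μ hz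
  have hpos : ∀ x : ℝ, 0 < -z.im * ((z - x)⁻¹).im := fun x => by
    rw [Complex.inv_im, Complex.sub_im, Complex.ofReal_im, sub_zero, mul_div_assoc', neg_mul_neg]
    exact div_pos (mul_self_pos.2 hz) (Complex.normSq_pos.2 (sub_ofReal_ne_zero hz x))
  have : 0 < -z.im * (stieltjesTransform μ z).im := by
    have him : (stieltjesTransform μ z).im = ∫ x : ℝ, ((z - x)⁻¹).im ∂μ :=
      (integral_im hint).symm
    rw [him, ← integral_const_mul, integral_pos_iff_support_of_nonneg (fun x => (hpos x).le)
      (hint.im.const_mul _), Function.support_eq_univ (fun x => (hpos x).ne')]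
    simp
  intro h
  simp [h] at this

lemma tendsto_stieltjesTransform_ofReal_mul (μ : Measure ℝ) [IsProbabilityMeasure μ] {z : ℂ}
    (hz : z.im ≠ 0) : Tendsto (fun t : ℝ => stieltjesTransform μ (t * z)) atTop (𝓝 0) := by
  have hbound : ∀ᶠ t : ℝ in atTop, ‖stieltjesTransform μ (t * z)‖ ≤ (t * |z.im|)⁻¹ := by
    filter_upwards [eventually_gt_atTop 0] with t ht
    exact norm_stieltjesTransform_le μ (by positivity) (by simp [abs_mul, abs_of_pos ht])
  exact squeeze_zero_norm' hbound
    (tendsto_inv_atTop_zero.comp (tendsto_id.atTop_mul_const (abs_pos.2 hz)))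

lemma stieltjesTransform_not_eventually_eq (μ : Measure ℝ) [IsProbabilityMeasure μ] {z₀ : ℂ}
    (hz₀ : z₀.im ≠ 0) (c : ℂ) : ¬ ∀ᶠ z in 𝓝 z₀, stieltjesTransform μ z = c := by
  intro hc
  set H := {z : ℂ | 0 < z.im * z₀.im}
  have hH : IsOpen H := isOpen_lt continuous_const (Complex.continuous_im.mul continuous_const)
  have hHconv : Convex ℝ H := convex_halfSpace_gt
    ⟨fun z w => by simp [add_mul], fun t z => by simp [mul_assoc]⟩ 0
  have hHim : H ⊆ {z | z.im ≠ 0} := fun z hz h => by simp [H, h] at hz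
  have hz₀H : z₀ ∈ H := mul_self_pos.2 hz₀
  have hGc : EqOn (stieltjesTransform μ) (fun _ => c) H :=
    ((analyticOnNhd_stieltjesTransform μ).mono hHim).eqOn_of_preconnected_of_eventuallyEq
      analyticOnNhd_const hHconv.isPreconnected hz₀H hc
  have hc0 : c = 0 := by
    refine tendsto_nhds_unique' atTop_neBot tendsto_const_nhds
      ((tendsto_stieltjesTransform_ofReal_mul μ hz₀).congr' ?_)
    filter_upwards [eventually_gt_atTop 0] with t ht
    exact hGc (by simpa [H, mul_assoc] using mul_pos ht hz₀H)
  exact stieltjesTransform_ne_zero μ hz₀ (hc0 ▸ hGc hz₀H)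

section WeakConvergence

variable {ι : Type*} {l : Filter ι} (μ : ι → Measure ℝ) (ν : Measure ℝ)

lemma tendsto_integral_of_forall_tendsto_integral_real [∀ i, IsFiniteMeasure (μ i)]
    [IsFiniteMeasure ν]
    (hweak : ∀ f : ℝ → ℝ, Continuous f → (∃ M : ℝ, ∀ x, |f x| ≤ M) →
      Tendsto (fun i => ∫ x, f x ∂(μ i)) l (𝓝 (∫ x, f x ∂ν)))
    {g : ℝ → ℂ} (hg : Continuous g) {M : ℝ} (hM : ∀ x, ‖g x‖ ≤ M) :
    Tendsto (fun i => ∫ x, g x ∂(μ i)) l (𝓝 (∫ x, g x ∂ν)) := by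
  have hint : ∀ (σ : Measure ℝ) [IsFiniteMeasure σ], Integrable g σ := fun σ _ =>
    .of_bound hg.aestronglyMeasurable M (ae_of_all _ hM)
  have hre := hweak (fun x => (g x).re) (Complex.continuous_re.comp hg)
    ⟨M, fun x => (Complex.abs_re_le_norm _).trans (hM x)⟩
  have him := hweak (fun x => (g x).im) (Complex.continuous_im.comp hg)
    ⟨M, fun x => (Complex.abs_im_le_norm _).trans (hM x)⟩
  simp_rw [← integral_re_add_im (hint _)]
  exact ((Complex.continuous_ofReal.tendsto _).comp hre).add
    (((Complex.continuous_ofReal.tendsto _).comp him).mul_const _)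

lemma tendstoLocallyUniformlyOn_stieltjesTransform [∀ i, IsProbabilityMeasure (μ i)]
    [IsProbabilityMeasure ν]
    (hweak : ∀ f : ℝ → ℝ, Continuous f → (∃ M : ℝ, ∀ x, |f x| ≤ M) →
      Tendsto (fun i => ∫ x, f x ∂(μ i)) l (𝓝 (∫ x, f x ∂ν))) :
    TendstoLocallyUniformlyOn (fun i => stieltjesTransform (μ i)) (stieltjesTransform ν) l
      {z | z.im ≠ 0} := by
  rw [tendstoLocallyUniformlyOn_iff_forall_isCompact isOpen_setOf_im_ne_zero]
  intro K hKim hK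
  obtain ⟨d, hd, hdK⟩ := hK.exists_forall_le' (Complex.continuous_im.abs.continuousOn)
    (fun z hz => abs_pos.2 (hKim hz))
  have hequi : EquicontinuousOn (fun i => stieltjesTransform (μ i)) K :=
    (LipschitzOnWith.uniformEquicontinuousOn _ _ fun i =>
      (lipschitzOnWith_stieltjesTransform (μ i) hd).mono hdK).equicontinuousOn
  have hpt : ∀ z ∈ K, Tendsto (fun i => stieltjesTransform (μ i) z) l
      (𝓝 (stieltjesTransform ν z)) := fun z hz =>
    tendsto_integral_of_forall_tendsto_integral_real μ ν hweak (continuous_inv_sub_ofReal (hKim hz))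
      (norm_inv_sub_ofReal_le (abs_pos.2 (hKim hz)) le_rfl)
  suffices Tendsto (UniformOnFun.ofFun {K} ∘ fun i => stieltjesTransform (μ i)) l
      (𝓝 (UniformOnFun.ofFun {K} (stieltjesTransform ν))) from
    UniformOnFun.tendsto_iff_tendstoUniformlyOn.1 this K rfl
  rw [EquicontinuousOn.tendsto_uniformOnFun_iff_pi' (by simpa using hK) (by simpa using hequi),
    tendsto_pi_nhds]
  rintro ⟨z, hz⟩
  exact hpt z (by simpa using hz)

end WeakConvergence

lemma stieltjesSolMult_of_analyticAt {G : ℂ → ℂ} {ζ z : ℂ} (hG : AnalyticAt ℂ G z) :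
    stieltjesSolMult G ζ z = analyticOrderAt (fun w => G w - ζ) z :=
  dif_pos (hG.fun_sub analyticAt_const)

lemma one_le_stieltjesSolMult {G : ℂ → ℂ} {ζ z : ℂ} (hG : AnalyticAt ℂ G z) (hz : G z = ζ) :
    1 ≤ stieltjesSolMult G ζ z := by
  rw [stieltjesSolMult_of_analyticAt hG, Order.one_le_iff_ne_zero,
    (hG.fun_sub analyticAt_const).analyticOrderAt_ne_zero, hz, sub_self]

theorem stieltjes_inverse_bound_weak_limit_general
    (μ : ℕ → Measure ℝ) (ν : Measure ℝ)
    [∀ n, IsProbabilityMeasure (μ n)] [IsProbabilityMeasure ν]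
    (hweak : ∀ f : ℝ → ℝ, Continuous f → (∃ M : ℝ, ∀ x, |f x| ≤ M) →
      Tendsto (fun n => ∫ x, f x ∂(μ n)) atTop (nhds (∫ x, f x ∂ν)))
    (N : ℕ)
    (hbound : ∀ n : ℕ, ∀ ζ : ℂ, ∀ S : Finset ℂ,
      (∀ z ∈ S, z.im ≠ 0 ∧ (∫ x : ℝ, (z - (x : ℂ))⁻¹ ∂(μ n)) = ζ) →
      ∑ z ∈ S, stieltjesSolMult (fun w => ∫ x : ℝ, (w - (x : ℂ))⁻¹ ∂(μ n)) ζ z ≤ (N : ℕ∞)) :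
    ∀ ζ : ℂ, ∀ S : Finset ℂ,
      (∀ z ∈ S, z.im ≠ 0 ∧ (∫ x : ℝ, (z - (x : ℂ))⁻¹ ∂ν) = ζ) →
      ∑ z ∈ S, stieltjesSolMult (fun w => ∫ x : ℝ, (w - (x : ℂ))⁻¹ ∂ν) ζ z ≤ (N : ℕ∞) := by
  change ∀ n ζ (S : Finset ℂ), (∀ z ∈ S, z.im ≠ 0 ∧ stieltjesTransform (μ n) z = ζ) →
    ∑ z ∈ S, stieltjesSolMult (stieltjesTransform (μ n)) ζ z ≤ N at hbound
  change ∀ ζ (S : Finset ℂ), (∀ z ∈ S, z.im ≠ 0 ∧ stieltjesTransform ν z = ζ) →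
    ∑ z ∈ S, stieltjesSolMult (stieltjesTransform ν) ζ z ≤ N
  intro ζ S hS
  have hSU : ↑S ⊆ {z : ℂ | z.im ≠ 0} := fun z hz => (hS z hz).1
  have hG := analyticOnNhd_stieltjesTransform ν
  have hfin : ∀ z ∈ S, analyticOrderAt (fun w => stieltjesTransform ν w - ζ) z ≠ ⊤ :=
    fun z hz htop => stieltjesTransform_not_eventually_eq ν (hS z hz).1 ζ
      (by simpa [sub_eq_zero] using analyticOrderAt_eq_top.1 htop)
  obtain ⟨ζ', W, hWU, hWcard, hWζ'⟩ := (eventually_exists_finset_card_eq_sum_analyticOrderAt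
    isOpen_setOf_im_ne_zero hSU (fun z hz => hG z (hSU hz)) hfin).exists
  obtain ⟨n, W', hW'U, hW'card, hW'ζ'⟩ :=
    (eventually_exists_finset_card_eq_of_tendstoLocallyUniformlyOn isOpen_setOf_im_ne_zero
    (.of_forall fun n => (analyticOnNhd_stieltjesTransform (μ n)).differentiableOn)
    hG (tendstoLocallyUniformlyOn_stieltjesTransform μ ν hweak)
    (fun z hz => stieltjesTransform_not_eventually_eq ν hz) hWU hWζ').exists
  calc ∑ z ∈ S, stieltjesSolMult (stieltjesTransform ν) ζ z
      = ∑ z ∈ S, analyticOrderAt (fun w => stieltjesTransform ν w - ζ) z :=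
        Finset.sum_congr rfl fun z hz => stieltjesSolMult_of_analyticAt (hG z (hSU hz))
    _ = W'.card := by rw [← hWcard, hW'card]
    _ ≤ ∑ z ∈ W', stieltjesSolMult (stieltjesTransform (μ n)) ζ' z := by
        simpa using Finset.card_nsmul_le_sum W' _ 1 fun z hz =>
          one_le_stieltjesSolMult (analyticOnNhd_stieltjesTransform (μ n) z (hW'U hz)) (hW'ζ' z hz)
    _ ≤ N := hbound n ζ' W' fun z hz => ⟨hW'U hz, hW'ζ' z hz⟩

/-- if `μ_n → μ` weakly, all supported in a fixed compact set, and for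
every `n` and every `ζ` the equation `G_{μ_n}(z) = ζ` has at most `N` solutions in
`ℂ \ ℝ` counted with multiplicity, then the same bound holds for `G_μ`. -/
theorem stieltjes_inverse_bound_weak_limit
    (μ : ℕ → Measure ℝ) (ν : Measure ℝ)
    [∀ n, IsProbabilityMeasure (μ n)] [IsProbabilityMeasure ν]
    (Γ : Set ℝ) (hΓ : IsCompact Γ)
    (hsuppn : ∀ n, (μ n) Γᶜ = 0) (hsupp : ν Γᶜ = 0)
    (hweak : ∀ f : ℝ → ℝ, Continuous f → (∃ M : ℝ, ∀ x, |f x| ≤ M) →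
      Tendsto (fun n => ∫ x, f x ∂(μ n)) atTop (nhds (∫ x, f x ∂ν)))
    (N : ℕ)
    (hbound : ∀ n : ℕ, ∀ ζ : ℂ, ∀ S : Finset ℂ,
      (∀ z ∈ S, z.im ≠ 0 ∧ (∫ x : ℝ, (z - (x : ℂ))⁻¹ ∂(μ n)) = ζ) →
      ∑ z ∈ S, stieltjesSolMult (fun w => ∫ x : ℝ, (w - (x : ℂ))⁻¹ ∂(μ n)) ζ z ≤ (N : ℕ∞)) :
    ∀ ζ : ℂ, ∀ S : Finset ℂ,
      (∀ z ∈ S, z.im ≠ 0 ∧ (∫ x : ℝ, (z - (x : ℂ))⁻¹ ∂ν) = ζ) →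
      ∑ z ∈ S, stieltjesSolMult (fun w => ∫ x : ℝ, (w - (x : ℂ))⁻¹ ∂ν) ζ z ≤ (N : ℕ∞) :=
  stieltjes_inverse_bound_weak_limit_general μ ν hweak N hbound
end

section
/- Let f and g be holomorphic on an open set U containing the closed disc of radius d centered at z₀. Suppose f has a zero of order k at z₀ and no other zeros in the open disc B(z₀, d). Let ε ∈ (0,d), set b = ε/d and M = max_{|w−z₀|=d} |f(w)|. If sup_{|w−z₀|=ε} |f(w) − g(w)| < (|f^{(k)}(z₀)|/k!)·ε^k − M·b^{k+1}/(1−b), then g has exactly k zeros (counted with multiplicity) in the open disc B(z₀, ε). -/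
/-!
Cauchy's estimates bound the Taylor coefficients of `f` at `z₀` by `M / dⁿ`, so on the circle
`|w - z₀| = ε` the Taylor remainder after the first nonzero term is at most `M bᵏ⁺¹ / (1 - b)`.
The hypothesis therefore gives `|f - g| < |f|` on that circle, and Rouché's theorem applies.
By the argument principle (proved by dividing out the zeros one at a time) the two zero counts are
`(2πi)⁻¹ ∮ g'/g` and `(2πi)⁻¹ ∮ f'/f`; their difference is the integral of the derivative of
`log (g / f)`, which is well defined on the circle because `g / f` stays in the disc `|ζ - 1| < 1`.
-/

open Metric Set

open scoped Classical in
/-- The order of vanishing of `g` at `z` (as an extended natural number),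
`0` if `g` is not analytic there. -/
noncomputable def zeroOrderAt (g : ℂ → ℂ) (z : ℂ) : ℕ∞ :=
  if _h : AnalyticAt ℂ g z then analyticOrderAt g z else 0

open Complex Real

theorem AnalyticOnNhd.analyticOrderAt_ne_top_of_ne_zero {𝕜 E : Type*} [NontriviallyNormedField 𝕜]
    [NormedAddCommGroup E] [NormedSpace 𝕜 E] {f : 𝕜 → E} {U : Set 𝕜}
    (hf : AnalyticOnNhd 𝕜 f U) (hU : IsPreconnected U) {x y : 𝕜} (hx : x ∈ U) (hfx : f x ≠ 0)
    (hy : y ∈ U) : analyticOrderAt f y ≠ ⊤ :=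
  hf.analyticOrderAt_ne_top_of_isPreconnected hU hx hy
    (by simp [(hf x hx).analyticOrderAt_eq_zero.mpr hfx])

theorem AnalyticOnNhd.finite_setOf_eq_zero {𝕜 E : Type*} [NontriviallyNormedField 𝕜]
    [NormedAddCommGroup E] [NormedSpace 𝕜 E] {f : 𝕜 → E} {K : Set 𝕜}
    (hf : AnalyticOnNhd 𝕜 f K) (hK : IsCompact K) (hK' : IsPreconnected K) {x : 𝕜}
    (hx : x ∈ K) (hfx : f x ≠ 0) : {z ∈ K | f z = 0}.Finite := by
  rcases hf.eqOn_zero_or_eventually_ne_zero_of_preconnected hK' with hzero | hne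
  · exact absurd (hzero hx) hfx
  · exact (hK.finite_sdiff_of_mem_codiscreteWithin hne).subset fun z hz => ⟨hz.1, not_not.2 hz.2⟩

theorem zeroOrderAt_eq_analyticOrderNatAt {g : ℂ → ℂ} {K : Set ℂ} (hg : AnalyticOnNhd ℂ g K)
    (hK : IsPreconnected K) {x z : ℂ} (hx : x ∈ K) (hgx : g x ≠ 0) (hz : z ∈ K) :
    zeroOrderAt g z = analyticOrderNatAt g z := by
  rw [zeroOrderAt, dif_pos (hg z hz),
    Nat.cast_analyticOrderNatAt (hg.analyticOrderAt_ne_top_of_ne_zero hK hx hgx hz)]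

theorem DifferentiableOn.exists_eq_pow_mul_of_analyticOrderAt_eq {V : Set ℂ} (hV : IsOpen V)
    {h : ℂ → ℂ} (hh : DifferentiableOn ℂ h V) {a : ℂ} (ha : a ∈ V) {m : ℕ}
    (hm : analyticOrderAt h a = m) :
    ∃ u : ℂ → ℂ, DifferentiableOn ℂ u V ∧ u a ≠ 0 ∧ ∀ z, h z = (z - a) ^ m * u z := by
  induction m generalizing h with
  | zero =>
    refine ⟨h, hh, ?_, by simp⟩
    exact ((hh.analyticOnNhd hV) a ha).analyticOrderAt_eq_zero.mp (by exact_mod_cast hm)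
  | succ m ih =>
    have ha0 : h a = 0 := apply_eq_zero_of_analyticOrderAt_ne_zero (by simp [hm])
    have hdslope : DifferentiableOn ℂ (dslope h a) V :=
      (differentiableOn_dslope (hV.mem_nhds ha)).mpr hh
    have hfactor : h = (· - a) * dslope h a :=
      funext fun z => (sub_smul_dslope_of_zero ha0 z).symm
    have horder : analyticOrderAt (dslope h a) a = m := by
      have := analyticOrderAt_mul (z₀ := a) (f := (· - a)) (by fun_prop)
        ((hdslope.analyticOnNhd hV) a ha)
      rw [← hfactor, hm, analyticOrderAt_id_sub_const_self, Nat.cast_succ, add_comm] at this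
      exact (WithTop.add_left_cancel ENat.one_ne_top this).symm
    obtain ⟨u, hu, hua, hhu⟩ := ih hdslope horder
    refine ⟨u, hu, hua, fun z => ?_⟩
    rw [hfactor, Pi.mul_apply, hhu, pow_succ]
    ring

theorem DifferentiableOn.differentiableOn_logDeriv {V K : Set ℂ} (hV : IsOpen V) {h : ℂ → ℂ}
    (hh : DifferentiableOn ℂ h V) (hK : K ⊆ V) (hne : ∀ z ∈ K, h z ≠ 0) :
    DifferentiableOn ℂ (logDeriv h) K :=
  ((hh.deriv hV).mono hK).div (hh.mono hK) hne

theorem logDeriv_sub_pow_mul {u : ℂ → ℂ} {a z : ℂ} (m : ℕ) (hz : z ≠ a) (hu : u z ≠ 0)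
    (hdu : DifferentiableAt ℂ u z) :
    logDeriv (fun w => (w - a) ^ m * u w) z = m * (z - a)⁻¹ + logDeriv u z := by
  have hza : z - a ≠ 0 := sub_ne_zero.mpr hz
  rw [logDeriv_mul (f := fun w => (w - a) ^ m) z (pow_ne_zero m hza) hu (by fun_prop) hdu,
    logDeriv_fun_pow (f := (· - a)) (by fun_prop), logDeriv_apply]
  simp [div_eq_mul_inv]

theorem analyticOrderAt_sub_pow_mul_of_ne {u : ℂ → ℂ} {a z : ℂ} (m : ℕ) (hz : z ≠ a)
    (hu : AnalyticAt ℂ u z) :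
    analyticOrderAt (fun w => (w - a) ^ m * u w) z = analyticOrderAt u z := by
  rw [show (fun w => (w - a) ^ m * u w) = (· - a) ^ m * u from rfl,
    analyticOrderAt_mul (by fun_prop) hu,
    (show AnalyticAt ℂ ((· - a) ^ m) z by fun_prop).analyticOrderAt_eq_zero.mpr
      (pow_ne_zero m (sub_ne_zero.mpr hz)), zero_add]

theorem circleIntegral_logDeriv_eq_sum_analyticOrderNatAt {V : Set ℂ} (hV : IsOpen V)
    {h : ℂ → ℂ} (hh : DifferentiableOn ℂ h V) {c : ℂ} {r : ℝ} (hr : 0 < r)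
    (hsub : closedBall c r ⊆ V) (hne : ∀ z ∈ sphere c r, h z ≠ 0) {S : Finset ℂ}
    (hS : ↑S ⊆ ball c r) (hzeros : ∀ z ∈ ball c r, h z = 0 → z ∈ S) :
    ∮ z in C(c, r), logDeriv h z = 2 * π * I * ∑ z ∈ S, (analyticOrderNatAt h z : ℂ) := by
  induction S using Finset.induction_on generalizing h with
  | empty =>
    have hne' : ∀ z ∈ closedBall c r, h z ≠ 0 := fun z hz h0 => by
      rcases (mem_closedBall.mp hz).lt_or_eq with hlt | heq
      · exact Finset.notMem_empty z (hzeros z (mem_ball.mpr hlt) h0)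
      · exact hne z (mem_sphere.mpr heq) h0
    simpa using ((hh.differentiableOn_logDeriv hV hsub hne').diffContOnCl_ball
      subset_rfl).circleIntegral_eq_zero hr.le
  | insert a s has ih =>
    rw [Finset.coe_insert, insert_subset_iff] at hS
    obtain ⟨haball, hs⟩ := hS
    have haV : a ∈ V := hsub (ball_subset_closedBall haball)
    have hsph : ∀ z ∈ sphere c r, z ≠ a := fun z hz hza =>
      (mem_ball.mp haball).ne (hza ▸ mem_sphere.mp hz)
    obtain ⟨x, hx⟩ := (NormedSpace.sphere_nonempty (x := c)).mpr hr.le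
    have hord : analyticOrderAt h a ≠ ⊤ :=
      ((hh.analyticOnNhd hV).mono hsub).analyticOrderAt_ne_top_of_ne_zero
        (convex_closedBall c r).isPreconnected (sphere_subset_closedBall hx) (hne x hx)
        (ball_subset_closedBall haball)
    set m := analyticOrderNatAt h a
    obtain ⟨u, hu, hua, hhu⟩ := hh.exists_eq_pow_mul_of_analyticOrderAt_eq hV haV
      (Nat.cast_analyticOrderNatAt hord).symm
    have hfun : h = fun w => (w - a) ^ m * u w := funext hhu
    have hune : ∀ z ∈ sphere c r, u z ≠ 0 := fun z hz hu0 => hne z hz (by simp [hhu, hu0])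
    have huzeros : ∀ z ∈ ball c r, u z = 0 → z ∈ s := fun z hz hu0 =>
      (Finset.mem_insert.mp (hzeros z hz (by simp [hhu, hu0]))).resolve_left
        (by rintro rfl; exact hua hu0)
    have hsum : ∑ z ∈ s, (analyticOrderNatAt h z : ℂ) = ∑ z ∈ s, (analyticOrderNatAt u z : ℂ) := by
      refine Finset.sum_congr rfl fun z hz => ?_
      have hza : z ≠ a := by rintro rfl; exact has hz
      rw [analyticOrderNatAt, analyticOrderNatAt, hfun, analyticOrderAt_sub_pow_mul_of_ne m hza
        ((hu.analyticOnNhd hV) z (hsub (ball_subset_closedBall (hs hz))))]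
    have hlog : EqOn (logDeriv h) (fun z => m * (z - a)⁻¹ + logDeriv u z) (sphere c r) :=
      fun z hz => by
        rw [hfun]
        exact logDeriv_sub_pow_mul m (hsph z hz) (hune z hz)
          (hu.differentiableAt (hV.mem_nhds (hsub (sphere_subset_closedBall hz))))
    have hint_pole : CircleIntegrable (fun z => m * (z - a)⁻¹) c r :=
      (continuousOn_const.mul ((continuousOn_id.sub continuousOn_const).inv₀
        fun z hz => sub_ne_zero.mpr (hsph z hz))).circleIntegrable hr.le
    have hint_u : CircleIntegrable (logDeriv u) c r :=
      (hu.differentiableOn_logDeriv hV (sphere_subset_closedBall.trans hsub)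
        hune).continuousOn.circleIntegrable hr.le
    rw [circleIntegral.integral_congr hr.le hlog, circleIntegral.integral_add hint_pole hint_u,
      circleIntegral.integral_const_mul, circleIntegral.integral_sub_inv_of_mem_ball haball,
      ih hu hune hs huzeros, Finset.sum_insert has, hsum]
    ring

theorem circleIntegral_logDeriv_eq_zero_of_mem_slitPlane {φ : ℂ → ℂ} {c : ℂ} {r : ℝ}
    (hr : 0 ≤ r) (hφ : ∀ z ∈ sphere c r, DifferentiableAt ℂ φ z)
    (hslit : ∀ z ∈ sphere c r, φ z ∈ slitPlane) : ∮ z in C(c, r), logDeriv φ z = 0 := by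
  refine circleIntegral.integral_eq_zero_of_hasDerivWithinAt (f := Complex.log ∘ φ) hr
    fun z hz => ?_
  have := ((hasDerivAt_log (hslit z hz)).comp z (hφ z hz).hasDerivAt).hasDerivWithinAt
    (s := sphere c r)
  rwa [logDeriv_apply, div_eq_inv_mul]

theorem sum_analyticOrderNatAt_eq_of_norm_sub_lt {V : Set ℂ} (hV : IsOpen V) {f g : ℂ → ℂ}
    (hf : DifferentiableOn ℂ f V) (hg : DifferentiableOn ℂ g V) {c : ℂ} {r : ℝ} (hr : 0 < r)
    (hsub : closedBall c r ⊆ V) (hlt : ∀ z ∈ sphere c r, ‖f z - g z‖ < ‖f z‖)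
    {Sf Sg : Finset ℂ} (hSf : ↑Sf ⊆ ball c r) (hfzeros : ∀ z ∈ ball c r, f z = 0 → z ∈ Sf)
    (hSg : ↑Sg ⊆ ball c r) (hgzeros : ∀ z ∈ ball c r, g z = 0 → z ∈ Sg) :
    ∑ z ∈ Sf, analyticOrderNatAt f z = ∑ z ∈ Sg, analyticOrderNatAt g z := by
  have hsph : sphere c r ⊆ V := sphere_subset_closedBall.trans hsub
  have hf0 : ∀ z ∈ sphere c r, f z ≠ 0 := fun z hz h0 => by
    simpa [h0] using (norm_nonneg _).trans_lt (hlt z hz)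
  have hg0 : ∀ z ∈ sphere c r, g z ≠ 0 := fun z hz h0 => by simpa [h0] using hlt z hz
  have hdiff : ∀ {h : ℂ → ℂ}, DifferentiableOn ℂ h V → ∀ z ∈ sphere c r,
      DifferentiableAt ℂ h z := fun hh z hz => hh.differentiableAt (hV.mem_nhds (hsph hz))
  have hquot : ∮ z in C(c, r), logDeriv (fun w => g w / f w) z = 0 := by
    refine circleIntegral_logDeriv_eq_zero_of_mem_slitPlane hr.le
      (fun z hz => (hdiff hg z hz).div (hdiff hf z hz) (hf0 z hz)) fun z hz => ?_
    refine ball_one_subset_slitPlane ?_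
    rw [mem_ball, dist_eq_norm, div_sub_one (hf0 z hz), norm_div, norm_sub_rev,
      div_lt_one (norm_pos_iff.mpr (hf0 z hz))]
    exact hlt z hz
  have hsplit : EqOn (logDeriv fun w => g w / f w) (fun z => logDeriv g z - logDeriv f z)
      (sphere c r) := fun z hz =>
    logDeriv_div z (hg0 z hz) (hf0 z hz) (hdiff hg z hz) (hdiff hf z hz)
  rw [circleIntegral.integral_congr hr.le hsplit, circleIntegral.integral_sub
    ((hg.differentiableOn_logDeriv hV hsph hg0).continuousOn.circleIntegrable hr.le)
    ((hf.differentiableOn_logDeriv hV hsph hf0).continuousOn.circleIntegrable hr.le),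
    sub_eq_zero, circleIntegral_logDeriv_eq_sum_analyticOrderNatAt hV hg hr hsub hg0 hSg hgzeros,
    circleIntegral_logDeriv_eq_sum_analyticOrderNatAt hV hf hr hsub hf0 hSf hfzeros] at hquot
  exact_mod_cast (mul_left_cancel₀ two_pi_I_ne_zero hquot).symm

theorem norm_sub_taylor_le {f : ℂ → ℂ} {c z : ℂ} {R M : ℝ} (hf : DiffContOnCl ℂ f (ball c R))
    (hM : ∀ w ∈ sphere c R, ‖f w‖ ≤ M) (hz : z ∈ ball c R) (k : ℕ) :
    ‖f z - ∑ n ∈ Finset.range (k + 1), (n.factorial : ℂ)⁻¹ • (z - c) ^ n • iteratedDeriv n f c‖ ≤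
      M * (‖z - c‖ / R) ^ (k + 1) / (1 - ‖z - c‖ / R) := by
  have hR : 0 < R := pos_of_mem_ball hz
  set b := ‖z - c‖ / R
  have hb0 : 0 ≤ b := by positivity
  have hb1 : b < 1 := (div_lt_one hR).mpr (mem_ball_iff_norm.mp hz)
  have hterm (n : ℕ) : ‖(n.factorial : ℂ)⁻¹ • (z - c) ^ n • iteratedDeriv n f c‖ ≤ M * b ^ n := by
    have hcauchy := norm_iteratedDeriv_le_of_forall_mem_sphere_norm_le n hR hf hM
    rw [norm_smul, norm_smul, norm_inv, norm_pow, Complex.norm_natCast, div_pow, mul_div_assoc']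
    calc (n.factorial : ℝ)⁻¹ * (‖z - c‖ ^ n * ‖iteratedDeriv n f c‖)
        ≤ (n.factorial : ℝ)⁻¹ * (‖z - c‖ ^ n * (n.factorial * M / R ^ n)) := by gcongr
      _ = M * ‖z - c‖ ^ n / R ^ n := by field_simp
  have htail :=
    (hasSum_nat_add_iff' (k + 1)).mpr (hasSum_taylorSeries_on_ball hf.differentiableOn hz)
  have hgeo : HasSum (fun n => M * b ^ (n + (k + 1))) (M * b ^ (k + 1) / (1 - b)) := by
    simpa [pow_add, mul_comm, mul_assoc, mul_left_comm, div_eq_mul_inv] using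
      (hasSum_geometric_of_lt_one hb0 hb1).mul_left (M * b ^ (k + 1))
  have := tsum_of_norm_bounded hgeo fun n => hterm (n + (k + 1))
  rwa [htail.tsum_eq] at this

theorem norm_iteratedDeriv_mul_pow_sub_le_norm {f : ℂ → ℂ} {c z : ℂ} {R M : ℝ} {k : ℕ}
    (hf : DiffContOnCl ℂ f (ball c R)) (hM : ∀ w ∈ sphere c R, ‖f w‖ ≤ M)
    (hzero : ∀ i < k, iteratedDeriv i f c = 0) (hz : z ∈ ball c R) :
    ‖iteratedDeriv k f c‖ / k.factorial * ‖z - c‖ ^ k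
      - M * (‖z - c‖ / R) ^ (k + 1) / (1 - ‖z - c‖ / R) ≤ ‖f z‖ := by
  have htaylor := norm_sub_taylor_le hf hM hz k
  rw [Finset.sum_range_succ, Finset.sum_eq_zero fun i hi => by
    simp [hzero i (Finset.mem_range.mp hi)], zero_add, norm_sub_rev] at htaylor
  have hterm : ‖(k.factorial : ℂ)⁻¹ • (z - c) ^ k • iteratedDeriv k f c‖ =
      ‖iteratedDeriv k f c‖ / k.factorial * ‖z - c‖ ^ k := by
    rw [norm_smul, norm_smul, norm_inv, norm_pow, Complex.norm_natCast]
    ring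
  linarith [norm_sub_norm_le ((k.factorial : ℂ)⁻¹ • (z - c) ^ k • iteratedDeriv k f c) (f z)]

theorem rouche_quantitative_general
    (U : Set ℂ) (f g : ℂ → ℂ)
    (hf : DifferentiableOn ℂ f U) (hg : DifferentiableOn ℂ g U)
    (z₀ : ℂ) (d : ℝ) (hball : closedBall z₀ d ⊆ U)
    (k : ℕ)
    (hzero : ∀ i < k, iteratedDeriv i f z₀ = 0)
    (hknz : iteratedDeriv k f z₀ ≠ 0)
    (hnozero : ∀ z ∈ ball z₀ d, z ≠ z₀ → f z ≠ 0)
    (ε : ℝ) (hε : 0 < ε) (hεd : ε < d)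
    (M : ℝ) (hM : ∀ w ∈ sphere z₀ d, ‖f w‖ ≤ M)
    (hclose : ∀ w ∈ sphere z₀ ε, ‖f w - g w‖ <
      ‖iteratedDeriv k f z₀‖ / (Nat.factorial k) * ε ^ k
        - M * (ε / d) ^ (k + 1) / (1 - ε / d)) :
    ∃ S : Finset ℂ, (↑S = {z ∈ ball z₀ ε | g z = 0}) ∧
      ∑ z ∈ S, zeroOrderAt g z = (k : ℕ∞) := by
  have hsub : closedBall z₀ ε ⊆ ball z₀ d := closedBall_subset_ball hεd
  have hfV : DifferentiableOn ℂ f (ball z₀ d) := hf.mono (ball_subset_closedBall.trans hball)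
  have hgV : DifferentiableOn ℂ g (ball z₀ d) := hg.mono (ball_subset_closedBall.trans hball)
  have hlt : ∀ w ∈ sphere z₀ ε, ‖f w - g w‖ < ‖f w‖ := fun w hw => by
    have hbound := norm_iteratedDeriv_mul_pow_sub_le_norm
      ((hf.mono hball).diffContOnCl_ball subset_rfl) hM hzero (hsub (sphere_subset_closedBall hw))
    rw [mem_sphere_iff_norm.mp hw] at hbound
    exact (hclose w hw).trans_le hbound
  have hg0 : ∀ w ∈ sphere z₀ ε, g w ≠ 0 := fun w hw h0 => by
    simpa [h0] using hlt w hw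
  obtain ⟨x, hx⟩ := (NormedSpace.sphere_nonempty (x := z₀)).mpr hε.le
  have hga : AnalyticOnNhd ℂ g (closedBall z₀ ε) := (hgV.analyticOnNhd isOpen_ball).mono hsub
  have hfin : {z ∈ ball z₀ ε | g z = 0}.Finite :=
    (hga.finite_setOf_eq_zero (isCompact_closedBall z₀ ε) (convex_closedBall z₀ ε).isPreconnected
      (sphere_subset_closedBall hx) (hg0 x hx)).subset
      fun z hz => ⟨ball_subset_closedBall hz.1, hz.2⟩
  refine ⟨hfin.toFinset, hfin.coe_toFinset, ?_⟩
  have hcount := sum_analyticOrderNatAt_eq_of_norm_sub_lt isOpen_ball hfV hgV hε hsub hlt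
    (Sf := {z₀}) (by simpa using hε)
    (fun z hz hfz => Finset.mem_singleton.mpr <|
      by_contra fun hne => hnozero z (ball_subset_ball hεd.le hz) hne hfz)
    (Sg := hfin.toFinset) (fun z hz => (hfin.mem_toFinset.mp hz).1)
    (fun z hz h0 => hfin.mem_toFinset.mpr ⟨hz, h0⟩)
  have hk : analyticOrderAt f z₀ = k :=
    (analyticOrderAt_eq_nat_iff_iteratedDeriv_eq_zero
      ((hfV.analyticOnNhd isOpen_ball) z₀ (mem_ball_self (hε.trans hεd)))).mpr ⟨hzero, hknz⟩
  rw [Finset.sum_singleton, analyticOrderNatAt, hk, ENat.toNat_natCast] at hcount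
  rw [hcount, Nat.cast_sum]
  exact Finset.sum_congr rfl fun z hz => zeroOrderAt_eq_analyticOrderNatAt hga
    (convex_closedBall z₀ ε).isPreconnected (sphere_subset_closedBall hx) (hg0 x hx)
    (ball_subset_closedBall (hfin.mem_toFinset.mp hz).1)

/-- quantitative Rouché-type theorem. If `f` has a zero of order `k`
at `z₀` and no other zeros in `B(z₀,d)`, and `g` is uniformly close enough to `f`
on the circle `|w - z₀| = ε`, then `g` has exactly `k` zeros (with multiplicity)
in `B(z₀,ε)`. -/
theorem rouche_quantitative
    (U : Set ℂ) (hU : IsOpen U) (f g : ℂ → ℂ)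
    (hf : DifferentiableOn ℂ f U) (hg : DifferentiableOn ℂ g U)
    (z₀ : ℂ) (d : ℝ) (hd : 0 < d) (hball : closedBall z₀ d ⊆ U)
    (k : ℕ)
    (hzero : ∀ i < k, iteratedDeriv i f z₀ = 0)
    (hknz : iteratedDeriv k f z₀ ≠ 0)
    (hnozero : ∀ z ∈ ball z₀ d, z ≠ z₀ → f z ≠ 0)
    (ε : ℝ) (hε : 0 < ε) (hεd : ε < d)
    (M : ℝ) (hM : ∀ w ∈ sphere z₀ d, ‖f w‖ ≤ M)
    (hclose : ∀ w ∈ sphere z₀ ε, ‖f w - g w‖ <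
      ‖iteratedDeriv k f z₀‖ / (Nat.factorial k) * ε ^ k
        - M * (ε / d) ^ (k + 1) / (1 - ε / d)) :
    ∃ S : Finset ℂ, (↑S = {z ∈ ball z₀ ε | g z = 0}) ∧
      ∑ z ∈ S, zeroOrderAt g z = (k : ℕ∞) :=
  rouche_quantitative_general U f g hf hg z₀ d hball k hzero hknz hnozero ε hε hεd M hM hclose
end

section
/- Let f be holomorphic on the closed disc |z−z₀| ≤ d with a zero of order k at z₀, and suppose |f(z)| ≤ M on |z−z₀| = d. Then for every z with |z − z₀| = ε < d, |f(z)| ≥ (|f^{(k)}(z₀)|/k!)·ε^k − M·(ε/d)^{k+1}/(1 − ε/d). -/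
/-! Expand `f` in its Taylor series at `z₀`. The terms of order `< k` vanish, and by Cauchy's
estimate on the circle of radius `d` the `n`-th term has norm at most `M (ε / d) ^ n`, so
everything beyond the `k`-th term is dominated by a geometric series. -/

open Metric Set

open Nat

namespace Complex

variable {E : Type*} [NormedAddCommGroup E] [NormedSpace ℂ E] [CompleteSpace E]
  {f : ℂ → E} {c z : ℂ} {R M : ℝ}

theorem norm_taylorSeries_term_le (hR : 0 < R) (hf : DiffContOnCl ℂ f (ball c R))
    (hM : ∀ w ∈ sphere c R, ‖f w‖ ≤ M) (n : ℕ) :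
    ‖(n ! : ℂ)⁻¹ • (z - c) ^ n • iteratedDeriv n f c‖ ≤ M * (‖z - c‖ / R) ^ n := by
  calc ‖(n ! : ℂ)⁻¹ • (z - c) ^ n • iteratedDeriv n f c‖
      = (n ! : ℝ)⁻¹ * ‖z - c‖ ^ n * ‖iteratedDeriv n f c‖ := by
        simp only [norm_smul, norm_inv, norm_pow, norm_natCast, mul_assoc]
    _ ≤ (n ! : ℝ)⁻¹ * ‖z - c‖ ^ n * (n ! * M / R ^ n) := by
        gcongr; exact norm_iteratedDeriv_le_of_forall_mem_sphere_norm_le n hR hf hM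
    _ = M * (‖z - c‖ / R) ^ n := by rw [div_pow]; field_simp

theorem norm_sub_taylorPolynomial_le (hR : 0 < R) (hf : DiffContOnCl ℂ f (ball c R))
    (hM : ∀ w ∈ sphere c R, ‖f w‖ ≤ M) (hz : z ∈ ball c R) (k : ℕ) :
    ‖f z - ∑ n ∈ Finset.range (k + 1), (n ! : ℂ)⁻¹ • (z - c) ^ n • iteratedDeriv n f c‖
      ≤ M * (‖z - c‖ / R) ^ (k + 1) / (1 - ‖z - c‖ / R) := by
  set r := ‖z - c‖ / R
  have hr₀ : 0 ≤ r := by positivity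
  have hr₁ : r < 1 := (div_lt_one hR).2 (mem_ball_iff_norm.1 hz)
  have htaylor := hasSum_taylorSeries_on_ball hf.differentiableOn hz
  have hgeom : HasSum (fun n ↦ M * r ^ (n + (k + 1))) (M * r ^ (k + 1) / (1 - r)) := by
    simpa only [pow_add, div_eq_mul_inv, mul_comm, mul_left_comm, mul_assoc] using
      (hasSum_geometric_of_lt_one hr₀ hr₁).mul_left (M * r ^ (k + 1))
  exact ((hasSum_nat_add_iff' (k + 1)).2 htaylor).norm_le_of_bounded hgeom
    fun n ↦ norm_taylorSeries_term_le hR hf hM _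

end Complex

theorem lower_bound_near_zero_of_order_general
    (f : ℂ → ℂ) (z₀ : ℂ) (d : ℝ) (hd : 0 < d)
    (hf : DifferentiableOn ℂ f (closedBall z₀ d))
    (k : ℕ)
    (hzero : ∀ i < k, iteratedDeriv i f z₀ = 0)
    (M : ℝ) (hM : ∀ w ∈ sphere z₀ d, ‖f w‖ ≤ M)
    (ε : ℝ) (hεd : ε < d) :
    ∀ z ∈ sphere z₀ ε,
      ‖iteratedDeriv k f z₀‖ / (Nat.factorial k) * ε ^ k
        - M * (ε / d) ^ (k + 1) / (1 - ε / d) ≤ ‖f z‖ := by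
  intro z hz
  have hzε : ‖z - z₀‖ = ε := mem_sphere_iff_norm.1 hz
  set leading := (k ! : ℂ)⁻¹ • (z - z₀) ^ k • iteratedDeriv k f z₀
  have hremainder := Complex.norm_sub_taylorPolynomial_le hd (hf.diffContOnCl_ball subset_rfl) hM
    (mem_ball_iff_norm.2 (hzε ▸ hεd)) k
  have hpolynomial : ∑ n ∈ Finset.range (k + 1), (n ! : ℂ)⁻¹ • (z - z₀) ^ n • iteratedDeriv n f z₀
      = leading := by
    rw [Finset.sum_range_succ, Finset.sum_eq_zero fun n hn ↦ by
      simp [hzero n (Finset.mem_range.1 hn)], zero_add]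
  have hleading : ‖leading‖ = ‖iteratedDeriv k f z₀‖ / k ! * ε ^ k := by
    simp only [leading, norm_smul, norm_inv, norm_pow, norm_natCast, hzε]
    ring
  rw [hpolynomial, hzε] at hremainder
  linarith [norm_le_norm_add_norm_sub (f z) leading]

/-- lower bound for `|f|` on a circle around a zero of order `k`.
If `f` is holomorphic on the closed disc `|z - z₀| ≤ d`, has a zero of order `k`
at `z₀`, and `|f| ≤ M` on the boundary circle, then on the circle of radius
`ε < d` one has `|f(z)| ≥ (|f^{(k)}(z₀)|/k!) ε^k − M (ε/d)^{k+1}/(1 − ε/d)`. -/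
theorem lower_bound_near_zero_of_order
    (f : ℂ → ℂ) (z₀ : ℂ) (d : ℝ) (hd : 0 < d)
    (hf : DifferentiableOn ℂ f (closedBall z₀ d))
    (k : ℕ)
    (hzero : ∀ i < k, iteratedDeriv i f z₀ = 0)
    (hknz : iteratedDeriv k f z₀ ≠ 0)
    (M : ℝ) (hM : ∀ w ∈ sphere z₀ d, ‖f w‖ ≤ M)
    (ε : ℝ) (hε : 0 < ε) (hεd : ε < d) :
    ∀ z ∈ sphere z₀ ε,
      ‖iteratedDeriv k f z₀‖ / (Nat.factorial k) * ε ^ k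
        - M * (ε / d) ^ (k + 1) / (1 - ε / d) ≤ ‖f z‖ :=
  lower_bound_near_zero_of_order_general f z₀ d hd hf k hzero M hM ε hεd
end
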